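/- arXiv:1405.4122 — 2 statements merged into one kernel-verified Lean document; each statement's English description precedes it below -/
import Mathlib

section
/- Let H₊ be a selfadjoint operator with 0 in its resolvent set, and T a bounded finite-rank symmetric operator. Then H := H₊ - T (defined on D(H₊)), if selfadjoint, has spectrum satisfying σ(H) ⊂ (-∞, -ε] ∪ {0} ∪ [ε, ∞) for some ε > 0; i.e., 0 is not an accumulation point of σ(H). -/
open scoped ComplexInnerProductSpace

/-- `z` belongs to the resolvent set of the (unbounded) operator `T`. -/
def IsInResolventSet {𝒳 : Type*} [NormedAddCommGroup 𝒳] [NormedSpace ℂ 𝒳]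
    (T : 𝒳 →ₗ.[ℂ] 𝒳) (z : ℂ) : Prop :=
  ∃ R : 𝒳 →L[ℂ] 𝒳, (∀ y : 𝒳, ∃ hy : R y ∈ T.domain, T ⟨R y, hy⟩ - z • R y = y) ∧
    ∀ x : T.domain, R (T x - z • (x : 𝒳)) = x

/-- The spectrum of an unbounded operator. -/
def pSpectrum {𝒳 : Type*} [NormedAddCommGroup 𝒳] [NormedSpace ℂ 𝒳]
    (T : 𝒳 →ₗ.[ℂ] 𝒳) : Set ℂ :=
  {z : ℂ | ¬ IsInResolventSet T z}

/-!
A self-adjoint `H` has every non-real `z` in its resolvent set: `H - z` is bounded below by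
`|Im z|`, so its range is closed, and a vector orthogonal to that range would be an eigenvector
for `conj z`. If `‖z‖ ‖H₊⁻¹‖ < 1`, a Neumann series gives the resolvent `R` of `H₊` at `z`, and
`H - z = (H₊ - z) (1 - R T)` with `R T` compact, so by the Fredholm alternative `z` is either in
the resolvent set of `H` or an eigenvalue of `H`. When `‖H₊⁻¹‖ δ < 1` only finitely many
eigenvalues lie in `(-δ, δ)`: for orthonormal eigenvectors `v r` the vectors `T (v r)` are
linearly independent in the finite-dimensional range of `T`, because a vector `x` in the span of
the `v r` with `T x = 0` satisfies `‖x‖ ≤ ‖H₊⁻¹‖ ‖H x‖ ≤ ‖H₊⁻¹‖ δ ‖x‖`.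
-/

open scoped ComplexConjugate

namespace LinearPMap

variable {R E : Type*} [Ring R] [AddCommGroup E] [Module R E]

def HasEigenvalue (A : E →ₗ.[R] E) (μ : R) : Prop :=
  ∃ x : A.domain, (x : E) ≠ 0 ∧ A x = μ • (x : E)

end LinearPMap

section Resolvent

variable {E : Type*} [NormedAddCommGroup E] [NormedSpace ℂ E] {A : E →ₗ.[ℂ] E} {z : ℂ} {b : ℝ}

theorem isInResolventSet_of_surjective (hb : 0 < b)
    (hlow : ∀ x : A.domain, b * ‖(x : E)‖ ≤ ‖A x - z • (x : E)‖)
    (hsurj : ∀ y, ∃ x : A.domain, A x - z • (x : E) = y) : IsInResolventSet A z := by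
  set e : A.domain →ₗ[ℂ] E := A.toFun - z • A.domain.subtype
  have hinj : Function.Injective e := by
    refine (injective_iff_map_eq_zero e).mpr fun x hx => ?_
    have h := hlow x
    change b * ‖(x : E)‖ ≤ ‖e x‖ at h
    rw [hx, norm_zero] at h
    have : ‖(x : E)‖ = 0 := le_antisymm (nonpos_of_mul_nonpos_right h hb) (norm_nonneg _)
    exact Subtype.ext (norm_eq_zero.mp this)
  let eqv := LinearEquiv.ofBijective e ⟨hinj, hsurj⟩
  have hbound : ∀ y, ‖(eqv.symm y : E)‖ ≤ b⁻¹ * ‖y‖ := fun y => by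
    rw [le_inv_mul_iff₀ hb]
    exact (hlow _).trans_eq (congrArg norm (eqv.apply_symm_apply y))
  exact ⟨(A.domain.subtype ∘ₗ eqv.symm.toLinearMap).mkContinuous b⁻¹ hbound,
    fun y => ⟨(eqv.symm y).2, eqv.apply_symm_apply y⟩,
    fun x => congrArg Subtype.val (eqv.symm_apply_apply x)⟩

theorem LinearPMap.IsClosed.isClosed_range_sub_smul [CompleteSpace E] (hA : A.IsClosed)
    (hb : 0 < b) (hlow : ∀ x : A.domain, b * ‖(x : E)‖ ≤ ‖A x - z • (x : E)‖) :
    _root_.IsClosed (Set.range fun x : A.domain => A x - z • (x : E)) := by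
  refine IsSeqClosed.isClosed fun f y hf hfy => ?_
  choose xs hxs using hf
  have hcauchy : CauchySeq fun n => (xs n : E) := by
    refine Metric.cauchySeq_iff.mpr fun ε hε => ?_
    obtain ⟨N, hN⟩ := Metric.cauchySeq_iff.mp hfy.cauchySeq (b * ε) (by positivity)
    refine ⟨N, fun m hm n hn => ?_⟩
    have h := hlow (xs m - xs n)
    simp only [LinearPMap.map_sub, Submodule.coe_sub, smul_sub, sub_sub_sub_comm, hxs] at h
    have hfmn := hN m hm n hn
    rw [dist_eq_norm] at hfmn ⊢
    exact lt_of_mul_lt_mul_left (h.trans_lt hfmn) hb.le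
  obtain ⟨x, hx⟩ := cauchySeq_tendsto_of_complete hcauchy
  have hgraph : (x, y + z • x) ∈ A.graph := by
    refine hA.mem_of_tendsto (hx.prodMk_nhds (hfy.add (hx.const_smul z)))
      (Filter.Eventually.of_forall fun n => ?_)
    exact A.mem_graph_iff.mpr ⟨xs n, rfl, by rw [← hxs n, sub_add_cancel]⟩
  obtain ⟨x', hx'x, hAx'⟩ := A.mem_graph_iff.mp hgraph
  refine ⟨x', ?_⟩
  change A x' - z • (x' : E) = y
  rw [hAx', hx'x, add_sub_cancel_right]

end Resolvent

section Perturbation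

variable {E : Type*} [NormedAddCommGroup E] [NormedSpace ℂ E] [CompleteSpace E]

theorem isInResolventSet_of_norm_sub_mul_norm_lt_one {A : E →ₗ.[ℂ] E} {z₀ z : ℂ}
    (R : E →L[ℂ] E) (hR₁ : ∀ y, ∃ hy : R y ∈ A.domain, A ⟨R y, hy⟩ - z₀ • R y = y)
    (hR₂ : ∀ x : A.domain, R (A x - z₀ • (x : E)) = x) (hz : ‖z - z₀‖ * ‖R‖ < 1) :
    IsInResolventSet A z := by
  have hz' : ‖(z - z₀) • R‖ < 1 := by rwa [norm_smul]
  set u := Units.oneSub _ hz'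
  have hu : ∀ y, u.val y = y - (z - z₀) • R y := fun _ => rfl
  have hu_inv : ∀ y, u.val (u.inv y) = y := fun y => DFunLike.congr_fun u.val_inv y
  have hinv_u : ∀ y, u.inv (u.val y) = y := fun y => DFunLike.congr_fun u.inv_val y
  refine ⟨R * u.inv, fun y => ?_, fun x => ?_⟩
  · obtain ⟨hy, hAy⟩ := hR₁ (u.inv y)
    refine ⟨hy, ?_⟩
    calc A ⟨R (u.inv y), hy⟩ - z • R (u.inv y)
        = (A ⟨R (u.inv y), hy⟩ - z₀ • R (u.inv y)) - (z - z₀) • R (u.inv y) := by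
          rw [sub_smul]; abel
      _ = u.val (u.inv y) := by rw [hAy, hu]
      _ = y := hu_inv y
  · have h : u.val (A x - z₀ • (x : E)) = A x - z • (x : E) := by
      rw [hu, hR₂, sub_smul]; abel
    change R (u.inv (A x - z • (x : E))) = x
    rw [← h, hinv_u, hR₂]

theorem isInResolventSet_or_hasEigenvalue_of_isCompactOperator {Hp H : E →ₗ.[ℂ] E}
    {T : E →L[ℂ] E} (hT : IsCompactOperator T) (hdom : H.domain = Hp.domain)
    (hact : ∀ (x : E) (hx : x ∈ H.domain) (hx' : x ∈ Hp.domain), H ⟨x, hx⟩ = Hp ⟨x, hx'⟩ - T x)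
    {z : ℂ} (hz : IsInResolventSet Hp z) : IsInResolventSet H z ∨ H.HasEigenvalue z := by
  obtain ⟨R, hR₁, hR₂⟩ := hz
  have hR₁' : ∀ y x, R y = x → ∃ hx : x ∈ Hp.domain, Hp ⟨x, hx⟩ - z • x = y := by
    rintro y x rfl
    exact hR₁ y
  have hsub : ∀ (x : E) (hx : x ∈ Hp.domain),
      H ⟨x, hdom ▸ hx⟩ - z • x = (Hp ⟨x, hx⟩ - z • x) - T x := fun x hx => by
    rw [hact x _ hx]; abel
  -- `H - z = (Hp - z) (1 - R T)` on the common domain, and `R T` is compact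
  rcases IsCompactOperator.hasEigenvalue_or_mem_resolventSet (T := R ∘L T) (hT.clm_comp R)
    one_ne_zero with heig | hres
  · right
    obtain ⟨w, hw⟩ := heig.exists_hasEigenvector
    obtain ⟨hw', hHpw⟩ := hR₁' (T w) w (by simpa using hw.apply_eq_smul)
    refine ⟨⟨w, hdom ▸ hw'⟩, hw.2, ?_⟩
    have := hsub w hw'
    rw [hHpw, sub_self] at this
    exact sub_eq_zero.mp this
  · left
    obtain ⟨u, hu⟩ := spectrum.mem_resolventSet_iff.mp hres
    have hu' : ∀ y, u.val y = y - R (T y) := fun y => by simp [hu]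
    have hu_inv : ∀ y, u.val (u.inv y) = y := fun y => DFunLike.congr_fun u.val_inv y
    have hinv_u : ∀ y, u.inv (u.val y) = y := fun y => DFunLike.congr_fun u.inv_val y
    refine ⟨u.inv * R, fun y => ?_, fun x => ?_⟩
    · set x := u.inv (R y)
      have hx : R (y + T x) = x := by
        have := hu_inv (R y)
        rw [hu'] at this
        rw [R.map_add, ← this, sub_add_cancel]
      obtain ⟨hx', hHpx⟩ := hR₁' _ _ hx
      refine ⟨hdom ▸ hx', ?_⟩
      change H ⟨x, hdom ▸ hx'⟩ - z • x = y
      rw [hsub x hx', hHpx, add_sub_cancel_right]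
    · have hx : (x : E) ∈ Hp.domain := hdom ▸ x.2
      change u.inv (R (H x - z • (x : E))) = x
      rw [show H x - z • (x : E) = (Hp ⟨x, hx⟩ - z • (x : E)) - T x from hsub x hx, R.map_sub,
        hR₂ ⟨x, hx⟩, ← hu', hinv_u]

end Perturbation

section Hilbert

variable {E : Type*} [NormedAddCommGroup E] [InnerProductSpace ℂ E] {A : E →ₗ.[ℂ] E}

theorem LinearPMap.HasEigenvalue.exists_norm_eq_one {μ : ℂ} (h : A.HasEigenvalue μ) :
    ∃ x : A.domain, ‖(x : E)‖ = 1 ∧ A x = μ • (x : E) := by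
  obtain ⟨x, hx0, hx⟩ := h
  refine ⟨(‖(x : E)‖⁻¹ : ℂ) • x, ?_, ?_⟩
  · simp [norm_smul, hx0]
  · rw [LinearPMap.map_smul, hx, Submodule.coe_smul, smul_comm]

theorem LinearPMap.IsFormalAdjoint.abs_im_mul_norm_le_norm_sub_smul (hA : A.IsFormalAdjoint A) (z : ℂ) (x : A.domain) :
    |z.im| * ‖(x : E)‖ ≤ ‖A x - z • (x : E)‖ := by
  have hreal : (⟪A x, (x : E)⟫).im = 0 := by
    rw [← Complex.conj_eq_iff_im, inner_conj_symm, hA x x]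
  have him : (⟪A x - z • (x : E), (x : E)⟫).im = z.im * ‖(x : E)‖ ^ 2 := by
    rw [inner_sub_left, inner_smul_left, inner_self_eq_norm_sq_to_K]
    simp [hreal, ← Complex.ofReal_pow]
  rcases (norm_nonneg (x : E)).eq_or_lt with h0 | h0
  · simp [← h0]
  refine le_of_mul_le_mul_right ?_ h0
  calc |z.im| * ‖(x : E)‖ * ‖(x : E)‖ = |(⟪A x - z • (x : E), (x : E)⟫).im| := by
        rw [him, abs_mul, abs_of_nonneg (sq_nonneg ‖(x : E)‖)]; ring
    _ ≤ ‖⟪A x - z • (x : E), (x : E)⟫‖ := Complex.abs_im_le_norm _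
    _ ≤ ‖A x - z • (x : E)‖ * ‖(x : E)‖ := norm_inner_le_norm _ _

variable [CompleteSpace E]

theorem IsSelfAdjoint.isFormalAdjoint (hA : IsSelfAdjoint A) : A.IsFormalAdjoint A := by
  have h := LinearPMap.adjoint_isFormalAdjoint hA.dense_domain (T := A)
  rwa [LinearPMap.isSelfAdjoint_def.mp hA] at h

theorem IsSelfAdjoint.exists_apply_eq_of_inner_eq (hA : IsSelfAdjoint A) {u w : E}
    (h : ∀ v : A.domain, ⟪w, (v : E)⟫ = ⟪u, A v⟫) : ∃ hu : u ∈ A.domain, A ⟨u, hu⟩ = w := by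
  have hu : u ∈ A.adjoint.domain := LinearPMap.mem_adjoint_domain_of_exists u ⟨w, h⟩
  have key : ∃ hu : u ∈ A.adjoint.domain, A.adjoint ⟨u, hu⟩ = w :=
    ⟨hu, LinearPMap.adjoint_apply_eq hA.dense_domain _ h⟩
  rwa [LinearPMap.isSelfAdjoint_def.mp hA] at key

theorem IsSelfAdjoint.isInResolventSet_of_im_ne_zero (hA : IsSelfAdjoint A) {z : ℂ}
    (hz : z.im ≠ 0) : IsInResolventSet A z := by
  have hlow := hA.isFormalAdjoint.abs_im_mul_norm_le_norm_sub_smul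
  have hb : 0 < |z.im| := abs_pos.mpr hz
  refine isInResolventSet_of_surjective hb (hlow z) ?_
  set e : A.domain →ₗ[ℂ] E := A.toFun - z • A.domain.subtype
  have hclosed : IsClosed (LinearMap.range e : Set E) :=
    hA.isClosed.isClosed_range_sub_smul hb (hlow z)
  have horth : (LinearMap.range e)ᗮ = ⊥ := by
    refine (Submodule.eq_bot_iff _).mpr fun u hu => ?_
    obtain ⟨hu', hAu⟩ := hA.exists_apply_eq_of_inner_eq (u := u) (w := conj z • u) fun v => by
      have h := (Submodule.mem_orthogonal _ _).mp hu (e v) (LinearMap.mem_range_self e v)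
      change ⟪A v - z • (v : E), u⟫ = 0 at h
      rw [inner_sub_left, sub_eq_zero, inner_smul_left] at h
      rw [inner_smul_left, ← inner_conj_symm u, ← inner_conj_symm u (A v), h, map_mul]
    have h := hlow (conj z) ⟨u, hu'⟩
    rw [hAu, sub_self, norm_zero, Complex.conj_im, abs_neg] at h
    exact norm_eq_zero.mp (le_antisymm (nonpos_of_mul_nonpos_right h hb) (norm_nonneg _))
  have htop : LinearMap.range e = ⊤ := by
    rw [← hclosed.submodule_topologicalClosure_eq, Submodule.topologicalClosure_eq_top_iff, horth]
  exact fun y => LinearMap.range_eq_top.mp htop y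

theorem IsSelfAdjoint.exists_eq_ofReal_of_mem_pSpectrum (hA : IsSelfAdjoint A) {z : ℂ}
    (hz : z ∈ pSpectrum A) : ∃ r : ℝ, z = r := by
  have him : z.im = 0 := by
    by_contra h
    exact hz (hA.isInResolventSet_of_im_ne_zero h)
  exact ⟨z.re, Complex.ext (by simp) (by simp [him])⟩

end Hilbert

section Orthonormal

variable {𝕜 E ι : Type*} [RCLike 𝕜] [NormedAddCommGroup E] [InnerProductSpace 𝕜 E]
  {v : ι → E}

theorem Orthonormal.norm_sum_smul_sq (hv : Orthonormal 𝕜 v) (s : Finset ι) (g : ι → 𝕜) :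
    ‖∑ i ∈ s, g i • v i‖ ^ 2 = ∑ i ∈ s, ‖g i‖ ^ 2 := by
  simpa using hv.orthogonalFamily.norm_sum g s

theorem Orthonormal.norm_sum_mul_smul_le (hv : Orthonormal 𝕜 v) (s : Finset ι) (g μ : ι → 𝕜)
    {δ : ℝ} (hμ : ∀ i ∈ s, ‖μ i‖ ≤ δ) :
    ‖∑ i ∈ s, (μ i * g i) • v i‖ ≤ δ * ‖∑ i ∈ s, g i • v i‖ := by
  rcases s.eq_empty_or_nonempty with rfl | ⟨i, hi⟩
  · simp
  have hδ : 0 ≤ δ := (norm_nonneg _).trans (hμ i hi)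
  refine (pow_le_pow_iff_left₀ (norm_nonneg _) (by positivity) two_ne_zero).mp ?_
  rw [mul_pow, hv.norm_sum_smul_sq, hv.norm_sum_smul_sq, Finset.mul_sum]
  refine Finset.sum_le_sum fun j hj => ?_
  rw [norm_mul, mul_pow]
  exact mul_le_mul_of_nonneg_right (pow_le_pow_left₀ (norm_nonneg _) (hμ j hj) 2) (sq_nonneg _)

end Orthonormal

section FiniteRank

variable {E : Type*} [NormedAddCommGroup E] [InnerProductSpace ℂ E]

theorem LinearPMap.IsFormalAdjoint.orthonormal_of_apply_eq_smul {ι : Type*} {A : E →ₗ.[ℂ] E}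
    (hA : A.IsFormalAdjoint A) {v : ι → A.domain} {μ : ι → ℝ} (hμ : Function.Injective μ)
    (hv₁ : ∀ i, ‖(v i : E)‖ = 1) (hv : ∀ i, A (v i) = (μ i : ℂ) • (v i : E)) :
    Orthonormal ℂ fun i => (v i : E) := by
  refine ⟨hv₁, fun i j hij => ?_⟩
  have h := hA (v i) (v j)
  rw [hv, hv, inner_smul_left, inner_smul_right, Complex.conj_ofReal] at h
  have hne : (μ i : ℂ) ≠ μ j := by exact_mod_cast hμ.ne hij
  exact (mul_eq_mul_right_iff.mp h).resolve_left hne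

variable {Hp H : E →ₗ.[ℂ] E} {Hpinv T : E →L[ℂ] E}

theorem norm_le_norm_mul_norm_apply_of_map_eq_zero (hinv : ∀ x : Hp.domain, Hpinv (Hp x) = x)
    (hdom : H.domain = Hp.domain)
    (hact : ∀ (x : E) (hx : x ∈ H.domain) (hx' : x ∈ Hp.domain), H ⟨x, hx⟩ = Hp ⟨x, hx'⟩ - T x)
    {x : H.domain} (hx : T x = 0) : ‖(x : E)‖ ≤ ‖Hpinv‖ * ‖H x‖ := by
  have hx' : (x : E) ∈ Hp.domain := hdom ▸ x.2
  have hHx : H x = Hp ⟨x, hx'⟩ := by rw [← sub_zero (Hp _), ← hx, ← hact]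
  calc ‖(x : E)‖ = ‖Hpinv (Hp ⟨x, hx'⟩)‖ := by rw [hinv]
    _ ≤ ‖Hpinv‖ * ‖H x‖ := by rw [hHx]; exact Hpinv.le_opNorm _

theorem finite_setOf_abs_lt_and_hasEigenvalue (hH : H.IsFormalAdjoint H)
    (hinv : ∀ x : Hp.domain, Hpinv (Hp x) = x)
    [FiniteDimensional ℂ (LinearMap.range (T : E →ₗ[ℂ] E))] (hdom : H.domain = Hp.domain)
    (hact : ∀ (x : E) (hx : x ∈ H.domain) (hx' : x ∈ Hp.domain), H ⟨x, hx⟩ = Hp ⟨x, hx'⟩ - T x)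
    {δ : ℝ} (hδ : ‖Hpinv‖ * δ < 1) :
    {r : ℝ | |r| < δ ∧ H.HasEigenvalue (r : ℂ)}.Finite := by
  set S := {r : ℝ | |r| < δ ∧ H.HasEigenvalue (r : ℂ)}
  choose v hv₁ hv using fun r : S => r.2.2.exists_norm_eq_one
  have hon : Orthonormal ℂ fun r => (v r : E) :=
    hH.orthonormal_of_apply_eq_smul Subtype.val_injective hv₁ hv
  have hker : ∀ (s : Finset S) (g : S → ℂ),
      T (∑ r ∈ s, g r • (v r : E)) = 0 → ∑ r ∈ s, g r • (v r : E) = 0 := by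
    intro s g hTY
    set Y : H.domain := ∑ r ∈ s, g r • v r
    have hY : (Y : E) = ∑ r ∈ s, g r • (v r : E) := by simp [Y]
    have hHY : H Y = ∑ r ∈ s, (((r : ℝ) : ℂ) * g r) • (v r : E) := by
      simp only [Y, ← LinearPMap.toFun_eq_coe, map_sum, map_smul]
      simp only [LinearPMap.toFun_eq_coe, hv, smul_smul, mul_comm]
    have hle : ‖(Y : E)‖ ≤ ‖Hpinv‖ * δ * ‖(Y : E)‖ := by
      calc ‖(Y : E)‖ ≤ ‖Hpinv‖ * ‖H Y‖ :=
            norm_le_norm_mul_norm_apply_of_map_eq_zero hinv hdom hact (hY ▸ hTY)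
        _ ≤ ‖Hpinv‖ * (δ * ‖(Y : E)‖) := by
            rw [hHY, hY]
            gcongr
            exact hon.norm_sum_mul_smul_le s g _ fun r _ => by simpa using r.2.1.le
        _ = ‖Hpinv‖ * δ * ‖(Y : E)‖ := by ring
    rw [← hY, ← norm_eq_zero]
    nlinarith [norm_nonneg (Y : E)]
  have hli : LinearIndependent ℂ fun r : S =>
      (⟨T (v r), LinearMap.mem_range_self _ _⟩ : LinearMap.range (T : E →ₗ[ℂ] E)) := by
    refine LinearIndependent.of_comp (LinearMap.range _).subtype ?_
    refine linearIndependent_iff'.mpr fun s g hsum => ?_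
    refine linearIndependent_iff'.mp hon.linearIndependent s g (hker s g ?_)
    simpa [map_sum] using hsum
  exact Set.finite_coe_iff.mp hli.finite

end FiniteRank

theorem Set.Finite.exists_pos_forall_le_abs {s : Set ℝ} (hs : s.Finite) :
    ∃ ε > 0, ∀ r ∈ s, r ≠ 0 → ε ≤ |r| := by
  obtain ⟨ε, hε, hball⟩ := Metric.mem_nhds_iff.mp
    ((hs.sdiff (t := {0})).isClosed.isOpen_compl.mem_nhds (show (0 : ℝ) ∈ _ by simp))
  exact ⟨ε, hε, fun r hr hr0 => not_lt.mp fun hrε =>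
    hball (mem_ball_zero_iff.mpr hrε) ⟨hr, hr0⟩⟩

theorem isCompactOperator_of_finiteDimensional_range {𝕜 E F : Type*} [RCLike 𝕜]
    [NormedAddCommGroup E] [NormedSpace 𝕜 E] [NormedAddCommGroup F] [NormedSpace 𝕜 F]
    (T : E →L[𝕜] F) [FiniteDimensional 𝕜 (LinearMap.range (T : E →ₗ[𝕜] F))] :
    IsCompactOperator T :=
  (isCompactOperator_of_locallyCompactSpace_dom
    (T.codRestrict _ (LinearMap.mem_range_self (T : E →ₗ[𝕜] F)))).clm_comp
    (LinearMap.range (T : E →ₗ[𝕜] F)).subtypeL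

theorem stmt7_general {𝒳 : Type*} [NormedAddCommGroup 𝒳] [InnerProductSpace ℂ 𝒳] [CompleteSpace 𝒳]
    (Hp : 𝒳 →ₗ.[ℂ] 𝒳)
    (Hpinv : 𝒳 →L[ℂ] 𝒳)
    (hinv1 : ∀ y : 𝒳, ∃ hy : Hpinv y ∈ Hp.domain, Hp ⟨Hpinv y, hy⟩ = y)
    (hinv2 : ∀ x : Hp.domain, Hpinv (Hp x) = x)
    (T : 𝒳 →L[ℂ] 𝒳)
    [FiniteDimensional ℂ (LinearMap.range (T : 𝒳 →ₗ[ℂ] 𝒳))]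
    (H : 𝒳 →ₗ.[ℂ] 𝒳) (hdom : H.domain = Hp.domain)
    (hact : ∀ (x : 𝒳) (hx : x ∈ H.domain) (hx' : x ∈ Hp.domain),
      H ⟨x, hx⟩ = Hp ⟨x, hx'⟩ - T x)
    (hH : IsSelfAdjoint H) :
    ∃ ε : ℝ, 0 < ε ∧ ∀ z ∈ pSpectrum H, z = 0 ∨ ∃ r : ℝ, z = (r : ℂ) ∧ ε ≤ |r| := by
  set δ := (‖Hpinv‖ + 1)⁻¹
  have hδ : 0 < δ := by positivity
  have hδ' : ‖Hpinv‖ * δ < 1 := by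
    rw [← div_eq_mul_inv, div_lt_one (by positivity)]
    exact lt_add_one _
  obtain ⟨ε₀, hε₀, hgap⟩ := (finite_setOf_abs_lt_and_hasEigenvalue hH.isFormalAdjoint hinv2
    hdom hact hδ').exists_pos_forall_le_abs
  refine ⟨min δ ε₀, lt_min hδ hε₀, fun z hz => ?_⟩
  obtain ⟨r, rfl⟩ := hH.exists_eq_ofReal_of_mem_pSpectrum hz
  rcases eq_or_ne r 0 with rfl | hr
  · simp
  refine .inr ⟨r, rfl, not_lt.mp fun hrε => ?_⟩
  have hrδ : |r| < δ := hrε.trans_le (min_le_left _ _)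
  have hsmall : ‖(r : ℂ) - 0‖ * ‖Hpinv‖ < 1 := by
    rw [sub_zero, Complex.norm_real, Real.norm_eq_abs, mul_comm]
    calc ‖Hpinv‖ * |r| ≤ ‖Hpinv‖ * δ := by gcongr
      _ < 1 := hδ'
  have hHp_res : IsInResolventSet Hp r := isInResolventSet_of_norm_sub_mul_norm_lt_one Hpinv
    (by simpa using hinv1) (by simpa using hinv2) hsmall
  rcases isInResolventSet_or_hasEigenvalue_of_isCompactOperator
    (isCompactOperator_of_finiteDimensional_range T) hdom hact hHp_res with hres | heig
  · exact hz hres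
  · exact (hgap r ⟨hrδ, heig⟩ hr).not_gt (hrε.trans_le (min_le_right _ _))

/-- Let `H₊` be selfadjoint with `0` in its resolvent set and `T` a bounded symmetric
finite-rank operator.  If `H := H₊ - T` (on `D(H₊)`) is selfadjoint, then
`σ(H) ⊂ (-∞, -ε] ∪ {0} ∪ [ε, ∞)` for some `ε > 0`. -/
theorem stmt7 {𝒳 : Type*} [NormedAddCommGroup 𝒳] [InnerProductSpace ℂ 𝒳] [CompleteSpace 𝒳]
    (Hp : 𝒳 →ₗ.[ℂ] 𝒳) (hHp : IsSelfAdjoint Hp)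
    (Hpinv : 𝒳 →L[ℂ] 𝒳)
    (hinv1 : ∀ y : 𝒳, ∃ hy : Hpinv y ∈ Hp.domain, Hp ⟨Hpinv y, hy⟩ = y)
    (hinv2 : ∀ x : Hp.domain, Hpinv (Hp x) = x)
    (T : 𝒳 →L[ℂ] 𝒳) (hTsym : ∀ x y : 𝒳, ⟪T x, y⟫ = ⟪x, T y⟫)
    [FiniteDimensional ℂ (LinearMap.range (T : 𝒳 →ₗ[ℂ] 𝒳))]
    (H : 𝒳 →ₗ.[ℂ] 𝒳) (hdom : H.domain = Hp.domain)
    (hact : ∀ (x : 𝒳) (hx : x ∈ H.domain) (hx' : x ∈ Hp.domain),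
      H ⟨x, hx⟩ = Hp ⟨x, hx'⟩ - T x)
    (hH : IsSelfAdjoint H) :
    ∃ ε : ℝ, 0 < ε ∧ ∀ z ∈ pSpectrum H, z = 0 ∨ ∃ r : ℝ, z = (r : ℂ) ∧ ε ≤ |r| :=
  stmt7_general Hp Hpinv hinv1 hinv2 T H hdom hact hH
end

section
/- Let S be a selfadjoint operator on L²(ℝ) and H := iJ√S ⊗-structured, i.e., H acting on L²(ℝ) ⊕ L²(ℝ) by H(z₁,z₂) = (i√S z₂, -i√S z₁) with domain D(√S) ⊕ D(√S), where S ≥ 0. Then H is selfadjoint, and σ(H) = {ω : ω² ∈ σ(S)} (the symmetric square-root set of σ(S)). -/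
open scoped ComplexInnerProductSpace
open MeasureTheory

/-- The space `L²(ℝ)`. -/
noncomputable abbrev L2R : Type := MeasureTheory.Lp ℂ 2 (volume : Measure ℝ)

/-!
Since `√S` is symmetric, so is `H`; testing a vector `q` of `D(H*)` against `(0, x)` and `(x, 0)`
shows `q ∈ D((√S)*) ⊕ D((√S)*) = D(H)`, so `H` is selfadjoint.

For the spectrum, `H² = S ⊕ S` on `{p ∈ D(H) | Hp ∈ D(H)}`, and the reflection `(x, y) ↦ (x, -y)`
anticommutes with `H`, so `H - z` is invertible iff `H + z` is. If both are, then
`(H + z)(H - z) = S ⊕ S - z²` is invertible, hence so is `S - z²`. Conversely, if `R = (S - z²)⁻¹`,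
then `√S R` is everywhere defined and closed, hence bounded, and `(H + z)(R ⊕ R)` is a bounded
right inverse of `H - z`; `H - z` is injective since `Hw = zw` forces `S wᵢ = z² wᵢ`.
-/

section Resolvent

variable {F : Type*} [NormedAddCommGroup F] [NormedSpace ℂ F] {T : F →ₗ.[ℂ] F} {z : ℂ}

theorem IsInResolventSet.eq_zero_of_apply_eq_smul (h : IsInResolventSet T z) {x : T.domain}
    (hx : T x = z • (x : F)) : (x : F) = 0 := by
  obtain ⟨R, -, hR⟩ := h
  rw [← hR x, hx, sub_self, map_zero]

theorem isInResolventSet_of_rightInverse (R : F →L[ℂ] F)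
    (hR : ∀ y, ∃ hy : R y ∈ T.domain, T ⟨R y, hy⟩ - z • R y = y)
    (hinj : ∀ x : T.domain, T x = z • (x : F) → (x : F) = 0) : IsInResolventSet T z := by
  refine ⟨R, hR, fun x => ?_⟩
  obtain ⟨hy, hRy⟩ := hR (T x - z • (x : F))
  refine sub_eq_zero.mp (hinj (⟨_, hy⟩ - x) ?_)
  rw [T.map_sub, Submodule.coe_sub]
  linear_combination (norm := module) hRy

theorem IsInResolventSet.neg_of_anticommute (U : F →L[ℂ] F) (hUU : ∀ x, U (U x) = x)
    (hUdom : ∀ x : T.domain, U x ∈ T.domain) (hTU : ∀ x : T.domain, T ⟨U x, hUdom x⟩ = -U (T x))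
    (h : IsInResolventSet T z) : IsInResolventSet T (-z) := by
  obtain ⟨R, hR, -⟩ := id h
  refine isInResolventSet_of_rightInverse (-(U ∘L R ∘L U)) (fun y => ?_) (fun x hx => ?_)
  · obtain ⟨hr, hRr⟩ := hR (U y)
    refine ⟨neg_mem (hUdom ⟨_, hr⟩), ?_⟩
    change T (-⟨U (R (U y)), hUdom ⟨_, hr⟩⟩) - -z • -U (R (U y)) = y
    rw [T.map_neg, hTU ⟨_, hr⟩, neg_neg]
    conv_rhs => rw [← hUU y, ← hRr]
    simp only [map_sub, map_smul]
    module
  · have hUx := h.eq_zero_of_apply_eq_smul (x := ⟨U x, hUdom x⟩) (by rw [hTU, hx]; simp)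
    rw [← hUU x, show U x = 0 from hUx, map_zero]

end Resolvent

theorem LinearPMap.IsClosed.continuous_comp_codRestrict {𝕜 E F G : Type*}
    [NontriviallyNormedField 𝕜] [NormedAddCommGroup E] [NormedSpace 𝕜 E]
    [NormedAddCommGroup F] [NormedSpace 𝕜 F] [CompleteSpace F]
    [NormedAddCommGroup G] [NormedSpace 𝕜 G] [CompleteSpace G]
    {A : E →ₗ.[𝕜] F} (hA : A.IsClosed) (R : G →L[𝕜] E) (hR : ∀ y, R y ∈ A.domain) :
    Continuous (A.toFun ∘ₗ (R : G →ₗ[𝕜] E).codRestrict A.domain hR) := by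
  refine LinearMap.continuous_of_seq_closed_graph _ fun u x y hu hAu => ?_
  have hgraph : (R x, y) ∈ A.graph :=
    hA.mem_of_tendsto (((R.continuous.tendsto x).comp hu).prodMk_nhds hAu)
      (Filter.Eventually.of_forall fun n => A.mem_graph_iff.mpr ⟨⟨R (u n), hR _⟩, rfl, rfl⟩)
  obtain ⟨w, hw, hAw⟩ := A.mem_graph_iff.mp hgraph
  exact hAw.symm.trans (congrArg A (Subtype.ext hw))

theorem WithLp.prod_ext {p : ENNReal} {α β : Type*} {x y : WithLp p (α × β)}
    (h₁ : x.fst = y.fst) (h₂ : x.snd = y.snd) : x = y :=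
  WithLp.ofLp_injective p (Prod.ext h₁ h₂)

section WithLpProdMap

variable {𝕜 α β α' β' : Type*} [Semiring 𝕜] (p : ENNReal)
  [TopologicalSpace α] [AddCommGroup α] [Module 𝕜 α]
  [TopologicalSpace β] [AddCommGroup β] [Module 𝕜 β]
  [TopologicalSpace α'] [AddCommGroup α'] [Module 𝕜 α']
  [TopologicalSpace β'] [AddCommGroup β'] [Module 𝕜 β']

def ContinuousLinearMap.withLpProdMap (A : α →L[𝕜] α') (B : β →L[𝕜] β') :
    WithLp p (α × β) →L[𝕜] WithLp p (α' × β') :=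
  (WithLp.prodContinuousLinearEquiv p 𝕜 α' β').symm.toContinuousLinearMap ∘L A.prodMap B ∘L
    (WithLp.prodContinuousLinearEquiv p 𝕜 α β).toContinuousLinearMap

end WithLpProdMap

structure LinearPMap.IsSquareOf {R E : Type*} [Ring R] [AddCommGroup E] [Module R E]
    (T S : E →ₗ.[R] E) : Prop where
  mem_domain_iff (x : E) : x ∈ S.domain ↔ ∃ hx : x ∈ T.domain, T ⟨x, hx⟩ ∈ T.domain
  apply_eq (x : S.domain) (y : T.domain) (hy : T y ∈ T.domain) :
    (x : E) = y → S x = T ⟨T y, hy⟩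

theorem IsSelfAdjoint.isFormalAdjoint_s10 {𝕜 E : Type*} [RCLike 𝕜] [NormedAddCommGroup E]
    [InnerProductSpace 𝕜 E] [CompleteSpace E] {A : E →ₗ.[𝕜] E} (hA : IsSelfAdjoint A) :
    A.IsFormalAdjoint A := by
  simpa only [LinearPMap.isSelfAdjoint_def.mp hA] using A.adjoint_isFormalAdjoint hA.dense_domain

section IJ

open Complex

variable {E : Type*} [NormedAddCommGroup E] [InnerProductSpace ℂ E]

local notation "𝒳" => WithLp 2 (E × E)

/-- `H = iJT` in the notation of the paper, where `J (z₁, z₂) = (z₂, -z₁)`. -/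
structure LinearPMap.IsIJMul (T : E →ₗ.[ℂ] E) (H : 𝒳 →ₗ.[ℂ] 𝒳) : Prop where
  mem_domain_iff (p : 𝒳) : p ∈ H.domain ↔ p.fst ∈ T.domain ∧ p.snd ∈ T.domain
  fst_apply (p : H.domain) (x : T.domain) : (p : 𝒳).snd = x → (H p).fst = I • T x
  snd_apply (p : H.domain) (x : T.domain) : (p : 𝒳).fst = x → (H p).snd = -(I • T x)

namespace LinearPMap.IsIJMul

variable {T S : E →ₗ.[ℂ] E} {H : WithLp 2 (E × E) →ₗ.[ℂ] WithLp 2 (E × E)} {z : ℂ}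

theorem toLp_mem_domain (hH : IsIJMul T H) {x y : E} (hx : x ∈ T.domain) (hy : y ∈ T.domain) :
    WithLp.toLp 2 (x, y) ∈ H.domain :=
  (hH.mem_domain_iff _).mpr ⟨hx, hy⟩

theorem apply_toLp (hH : IsIJMul T H) (x y : T.domain) :
    H ⟨WithLp.toLp 2 ((x : E), (y : E)), hH.toLp_mem_domain x.2 y.2⟩ =
      WithLp.toLp 2 (I • T y, -(I • T x)) :=
  WithLp.prod_ext (hH.fst_apply _ y rfl) (hH.snd_apply _ x rfl)

theorem isFormalAdjoint_s10 (hH : IsIJMul T H) (hT : T.IsFormalAdjoint T) : H.IsFormalAdjoint H := by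
  intro p q
  obtain ⟨p₁, p₂⟩ := (hH.mem_domain_iff p).mp p.2
  obtain ⟨q₁, q₂⟩ := (hH.mem_domain_iff q).mp q.2
  simp only [WithLp.prod_inner_apply, WithLp.ofLp_fst, WithLp.ofLp_snd,
    hH.fst_apply p ⟨_, p₂⟩ rfl, hH.snd_apply p ⟨_, p₁⟩ rfl,
    hH.fst_apply q ⟨_, q₂⟩ rfl, hH.snd_apply q ⟨_, q₁⟩ rfl,
    inner_smul_left, inner_smul_right, inner_neg_left, inner_neg_right,
    hT ⟨_, p₁⟩ ⟨_, q₂⟩, hT ⟨_, p₂⟩ ⟨_, q₁⟩, conj_I]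
  ring

theorem dense_domain (hH : IsIJMul T H) (hT : Dense (T.domain : Set E)) :
    Dense (H.domain : Set 𝒳) := by
  have hdom : (H.domain : Set 𝒳) =
      WithLp.ofLp ⁻¹' ((T.domain : Set E) ×ˢ (T.domain : Set E)) :=
    Set.ext hH.mem_domain_iff
  rw [hdom]
  exact (hT.prod hT).preimage (WithLp.prodContinuousLinearEquiv 2 ℂ E E).toHomeomorph.isOpenMap

theorem apply_apply (hH : IsIJMul T H) (hS : T.IsSquareOf S) (p : H.domain)
    (hp : H p ∈ H.domain) : ∃ (h₁ : (p : 𝒳).fst ∈ S.domain) (h₂ : (p : 𝒳).snd ∈ S.domain),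
      H ⟨H p, hp⟩ = WithLp.toLp 2 (S ⟨_, h₁⟩, S ⟨_, h₂⟩) := by
  obtain ⟨p₁, p₂⟩ := (hH.mem_domain_iff p).mp p.2
  obtain ⟨q₁, q₂⟩ := (hH.mem_domain_iff _).mp hp
  have hfst := hH.fst_apply p ⟨_, p₂⟩ rfl
  have hsnd := hH.snd_apply p ⟨_, p₁⟩ rfl
  have hTp₁ : T ⟨_, p₁⟩ ∈ T.domain := by
    rwa [hsnd, neg_mem_iff, Submodule.smul_mem_iff _ I_ne_zero] at q₂
  have hTp₂ : T ⟨_, p₂⟩ ∈ T.domain := by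
    rwa [hfst, Submodule.smul_mem_iff _ I_ne_zero] at q₁
  have hS₁ := (hS.mem_domain_iff _).mpr ⟨p₁, hTp₁⟩
  have hS₂ := (hS.mem_domain_iff _).mpr ⟨p₂, hTp₂⟩
  refine ⟨hS₁, hS₂, WithLp.prod_ext ?_ ?_⟩
  · rw [hH.fst_apply ⟨H p, hp⟩ (-(I • ⟨_, hTp₁⟩)) hsnd, hS.apply_eq ⟨_, hS₁⟩ ⟨_, p₁⟩ hTp₁ rfl,
      T.map_neg, T.map_smul]
    simp [smul_smul]
  · rw [hH.snd_apply ⟨H p, hp⟩ (I • ⟨_, hTp₂⟩) hfst, hS.apply_eq ⟨_, hS₂⟩ ⟨_, p₂⟩ hTp₂ rfl,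
      T.map_smul]
    simp [smul_smul]

theorem isInResolventSet_neg (hH : IsIJMul T H) (h : IsInResolventSet H z) :
    IsInResolventSet H (-z) := by
  set U := (ContinuousLinearMap.id ℂ E).withLpProdMap 2 (-ContinuousLinearMap.id ℂ E)
  have hU (p : 𝒳) : U p = WithLp.toLp 2 (p.fst, -p.snd) := rfl
  have hUdom (p : H.domain) : U p ∈ H.domain := by
    obtain ⟨p₁, p₂⟩ := (hH.mem_domain_iff p).mp p.2
    exact hH.toLp_mem_domain p₁ (neg_mem p₂)
  refine h.neg_of_anticommute U (fun p => WithLp.prod_ext rfl (neg_neg _)) hUdom (fun p => ?_)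
  obtain ⟨p₁, p₂⟩ := (hH.mem_domain_iff p).mp p.2
  refine WithLp.prod_ext ?_ ?_
  · rw [hH.fst_apply _ (-⟨_, p₂⟩) (by simp [hU]), T.map_neg]
    simp [hU, hH.fst_apply p ⟨_, p₂⟩ rfl]
  · rw [hH.snd_apply _ ⟨_, p₁⟩ (by simp [hU])]
    simp [hU, hH.snd_apply p ⟨_, p₁⟩ rfl]

theorem eq_zero_of_apply_eq_smul (hH : IsIJMul T H) (hS : T.IsSquareOf S)
    (h : IsInResolventSet S (z ^ 2)) (w : H.domain) (hw : H w = z • (w : 𝒳)) : (w : 𝒳) = 0 := by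
  have hHw : H w ∈ H.domain := hw ▸ H.domain.smul_mem z w.2
  obtain ⟨h₁, h₂, hHHw⟩ := hH.apply_apply hS w hHw
  have hsq : H ⟨H w, hHw⟩ = z ^ 2 • (w : 𝒳) := by
    rw [show (⟨H w, hHw⟩ : H.domain) = z • w from Subtype.ext hw, map_smul, hw, smul_smul, sq]
  rw [hHHw] at hsq
  exact WithLp.prod_ext (h.eq_zero_of_apply_eq_smul (x := ⟨_, h₁⟩) (congrArg WithLp.fst hsq))
    (h.eq_zero_of_apply_eq_smul (x := ⟨_, h₂⟩) (congrArg WithLp.snd hsq))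

theorem eq_zero_of_apply_eq_sq_smul (hH : IsIJMul T H) (hS : T.IsSquareOf S)
    (h : IsInResolventSet H z) (x : S.domain) (hx : S x = z ^ 2 • (x : E)) : (x : E) = 0 := by
  obtain ⟨hx₁, hx₂⟩ := (hS.mem_domain_iff x).mp x.2
  have hp := hH.toLp_mem_domain hx₁ (0 : T.domain).2
  have hHp : H ⟨_, hp⟩ ∈ H.domain := by
    rw [hH.apply_toLp ⟨_, hx₁⟩ 0, T.map_zero, smul_zero]
    exact hH.toLp_mem_domain (zero_mem _) (neg_mem (T.domain.smul_mem I hx₂))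
  obtain ⟨h₁, h₂, hHHp⟩ := hH.apply_apply hS ⟨_, hp⟩ hHp
  have hsq : H ⟨H ⟨_, hp⟩, hHp⟩ = z ^ 2 • WithLp.toLp 2 ((x : E), 0) :=
    hHHp.trans (WithLp.prod_ext hx (S.map_zero.trans (smul_zero _).symm))
  -- `(H - z)(H + z) p = (H² - z²) p = 0` for `p = (x, 0)`
  have hplus := h.eq_zero_of_apply_eq_smul (x := ⟨_, hHp⟩ + z • ⟨_, hp⟩) (by
    rw [map_add, map_smul, hsq]
    simp only [ZeroMemClass.coe_zero, SetLike.mk_smul_mk, AddMemClass.mk_add_mk, smul_add]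
    module)
  rw [Submodule.coe_add, Submodule.coe_smul] at hplus
  have hp0 := (hH.isInResolventSet_neg h).eq_zero_of_apply_eq_smul (x := ⟨_, hp⟩)
    (by linear_combination (norm := module) hplus)
  simpa using congrArg WithLp.fst hp0

theorem isInResolventSet_sq (hH : IsIJMul T H) (hS : T.IsSquareOf S)
    (h : IsInResolventSet H z) : IsInResolventSet S (z ^ 2) := by
  obtain ⟨Q, hQ, -⟩ := id h
  obtain ⟨Q', hQ', -⟩ := id (hH.isInResolventSet_neg h)
  refine isInResolventSet_of_rightInverse (WithLp.fstL 2 ℂ E E ∘L Q ∘L Q' ∘L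
    (WithLp.prodContinuousLinearEquiv 2 ℂ E E).symm.toContinuousLinearMap ∘L
      ContinuousLinearMap.inl ℂ E E) (fun y => ?_) (hH.eq_zero_of_apply_eq_sq_smul hS h)
  change ∃ h, S ⟨(Q (Q' (WithLp.toLp 2 (y, 0)))).fst, h⟩ -
    z ^ 2 • (Q (Q' (WithLp.toLp 2 (y, 0)))).fst = y
  obtain ⟨hv, hHv⟩ := hQ' (WithLp.toLp 2 (y, 0))
  obtain ⟨hu, hHu⟩ := hQ (Q' (WithLp.toLp 2 (y, 0)))
  generalize Q' (WithLp.toLp 2 (y, 0)) = v at hv hHv hu hHu ⊢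
  generalize Q v = u at hu hHu ⊢
  have hHu_mem : H ⟨u, hu⟩ ∈ H.domain := by
    rw [eq_add_of_sub_eq hHu]
    exact add_mem hv (H.domain.smul_mem z hu)
  obtain ⟨h₁, h₂, hHHu⟩ := hH.apply_apply hS ⟨u, hu⟩ hHu_mem
  have key : H ⟨H ⟨u, hu⟩, hHu_mem⟩ = WithLp.toLp 2 (y, 0) + z ^ 2 • u := by
    rw [show (⟨H ⟨u, hu⟩, hHu_mem⟩ : H.domain) = ⟨v, hv⟩ + z • ⟨u, hu⟩ from
      Subtype.ext (eq_add_of_sub_eq hHu), map_add, map_smul]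
    linear_combination (norm := module) hHv + z • hHu
  refine ⟨h₁, ?_⟩
  have := congrArg WithLp.fst (hHHu.symm.trans key)
  simp only [WithLp.toLp_fst, WithLp.add_fst, WithLp.smul_fst] at this
  rw [this, add_sub_cancel_right]

variable [CompleteSpace E]

theorem adjoint_domain_le (hH : IsIJMul T H) (hT : IsSelfAdjoint T) : H†.domain ≤ H.domain := by
  intro q hq
  have hTT : T† = T := hT
  have key := H.adjoint_isFormalAdjoint (hH.dense_domain hT.dense_domain) ⟨q, hq⟩
  set w := H† ⟨q, hq⟩
  refine (hH.mem_domain_iff q).mpr ⟨?_, ?_⟩ <;> rw [← hTT] <;> apply mem_adjoint_domain_of_exists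
  · refine ⟨I • w.snd, fun x => ?_⟩
    have hx := key ⟨_, hH.toLp_mem_domain (0 : T.domain).2 x.2⟩
    rw [hH.apply_toLp 0 x] at hx
    simp only [WithLp.prod_inner_apply, WithLp.ofLp_fst, WithLp.ofLp_snd, ZeroMemClass.coe_zero,
      T.map_zero, smul_zero, neg_zero, inner_zero_right, zero_add, add_zero, inner_smul_left,
      inner_smul_right, conj_I, neg_mul] at hx ⊢
    rw [hx, ← mul_assoc, I_mul_I]
    ring
  · refine ⟨-(I • w.fst), fun x => ?_⟩
    have hx := key ⟨_, hH.toLp_mem_domain x.2 (0 : T.domain).2⟩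
    rw [hH.apply_toLp x 0] at hx
    simp only [WithLp.prod_inner_apply, WithLp.ofLp_fst, WithLp.ofLp_snd, ZeroMemClass.coe_zero,
      T.map_zero, smul_zero, inner_zero_right, add_zero, zero_add, inner_neg_left, inner_neg_right,
      inner_smul_left, inner_smul_right, conj_I, neg_mul, neg_neg] at hx ⊢
    rw [hx, mul_neg, ← mul_assoc, I_mul_I]
    ring

theorem isSelfAdjoint (hH : IsIJMul T H) (hT : IsSelfAdjoint T) : IsSelfAdjoint H := by
  have hle : H ≤ H† :=
    (hH.isFormalAdjoint_s10 hT.isFormalAdjoint_s10).le_adjoint (hH.dense_domain hT.dense_domain)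
  exact (eq_of_le_of_domain_eq hle (le_antisymm hle.1 (hH.adjoint_domain_le hT))).symm

theorem isInResolventSet_of_sq (hH : IsIJMul T H) (hHc : H.IsClosed) (hS : T.IsSquareOf S)
    (h : IsInResolventSet S (z ^ 2)) : IsInResolventSet H z := by
  obtain ⟨R, hR, -⟩ := id h
  have hRS (y : E) : ∃ (hy : R y ∈ T.domain), T ⟨R y, hy⟩ ∈ T.domain :=
    (hS.mem_domain_iff _).mp (hR y).1
  set D := R.withLpProdMap 2 R
  have hDp (p : 𝒳) : D p = WithLp.toLp 2 (R p.fst, R p.snd) := rfl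
  have hD (p : 𝒳) : D p ∈ H.domain := hH.toLp_mem_domain (hRS _).1 (hRS _).1
  have hHD (p : 𝒳) : H ⟨D p, hD p⟩ ∈ H.domain := by
    obtain ⟨r₁, r₁'⟩ := hRS p.fst
    obtain ⟨r₂, r₂'⟩ := hRS p.snd
    change H ⟨WithLp.toLp 2 (R p.fst, R p.snd), hD p⟩ ∈ H.domain
    rw [hH.apply_toLp ⟨_, r₁⟩ ⟨_, r₂⟩]
    exact hH.toLp_mem_domain (T.domain.smul_mem I r₂') (neg_mem (T.domain.smul_mem I r₁'))
  -- `Q = (H + z)(R ⊕ R)`, bounded by the closed graph theorem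
  let Q : 𝒳 →L[ℂ] 𝒳 := ⟨H.toFun ∘ₗ (D : 𝒳 →ₗ[ℂ] 𝒳).codRestrict H.domain hD,
    hHc.continuous_comp_codRestrict D hD⟩ + z • D
  refine isInResolventSet_of_rightInverse Q
    (fun p => ⟨add_mem (hHD p) (H.domain.smul_mem z (hD p)), ?_⟩)
    (hH.eq_zero_of_apply_eq_smul hS h)
  obtain ⟨h₁, h₂, hHHD⟩ := hH.apply_apply hS ⟨D p, hD p⟩ (hHD p)
  change H (⟨H ⟨D p, hD p⟩, hHD p⟩ + z • ⟨D p, hD p⟩) - z • (H ⟨D p, hD p⟩ + z • D p) = p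
  rw [map_add, map_smul, hHHD]
  obtain ⟨_, hR₁⟩ := hR p.fst
  obtain ⟨_, hR₂⟩ := hR p.snd
  refine WithLp.prod_ext ?_ ?_
  · simp only [hDp, WithLp.toLp_fst, WithLp.sub_fst, WithLp.add_fst, WithLp.smul_fst]
    linear_combination (norm := module) hR₁
  · simp only [hDp, WithLp.toLp_snd, WithLp.sub_snd, WithLp.add_snd, WithLp.smul_snd]
    linear_combination (norm := module) hR₂

theorem mem_pSpectrum_iff (hH : IsIJMul T H) (hT : IsSelfAdjoint T) (hS : T.IsSquareOf S) :
    z ∈ pSpectrum H ↔ z ^ 2 ∈ pSpectrum S :=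
  not_congr ⟨hH.isInResolventSet_sq hS, hH.isInResolventSet_of_sq (hH.isSelfAdjoint hT).isClosed hS⟩

end LinearPMap.IsIJMul

end IJ

theorem stmt10_general
    (S sqrtS : L2R →ₗ.[ℂ] L2R)
    (hsqrt : IsSelfAdjoint sqrtS)
    (hdom : ∀ x : L2R, x ∈ S.domain ↔ ∃ hx : x ∈ sqrtS.domain, sqrtS ⟨x, hx⟩ ∈ sqrtS.domain)
    (hsq : ∀ (x : L2R) (hx : x ∈ sqrtS.domain) (hx2 : sqrtS ⟨x, hx⟩ ∈ sqrtS.domain)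
      (hxS : x ∈ S.domain), S ⟨x, hxS⟩ = sqrtS ⟨sqrtS ⟨x, hx⟩, hx2⟩)
    (H : WithLp 2 (L2R × L2R) →ₗ.[ℂ] WithLp 2 (L2R × L2R))
    (hHdom : ∀ p : WithLp 2 (L2R × L2R), p ∈ H.domain ↔
      (WithLp.equiv 2 (L2R × L2R) p).1 ∈ sqrtS.domain ∧
      (WithLp.equiv 2 (L2R × L2R) p).2 ∈ sqrtS.domain)
    (hHact : ∀ (p : H.domain)
      (h1 : (WithLp.equiv 2 (L2R × L2R) (p : WithLp 2 (L2R × L2R))).1 ∈ sqrtS.domain)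
      (h2 : (WithLp.equiv 2 (L2R × L2R) (p : WithLp 2 (L2R × L2R))).2 ∈ sqrtS.domain),
      H p = (WithLp.equiv 2 (L2R × L2R)).symm
        (Complex.I • sqrtS ⟨(WithLp.equiv 2 (L2R × L2R) (p : WithLp 2 (L2R × L2R))).2, h2⟩,
         -(Complex.I • sqrtS ⟨(WithLp.equiv 2 (L2R × L2R) (p : WithLp 2 (L2R × L2R))).1, h1⟩))) :
    IsSelfAdjoint H ∧ pSpectrum H = {z : ℂ | z ^ 2 ∈ pSpectrum S} := by
  have hH : sqrtS.IsIJMul H :=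
    { mem_domain_iff := hHdom
      fst_apply := fun p x hx => by
        obtain ⟨h₁, h₂⟩ := (hHdom p).mp p.2
        exact (congrArg WithLp.fst (hHact p h₁ h₂)).trans
          (congrArg (Complex.I • sqrtS ·) (Subtype.ext hx))
      snd_apply := fun p x hx => by
        obtain ⟨h₁, h₂⟩ := (hHdom p).mp p.2
        exact (congrArg WithLp.snd (hHact p h₁ h₂)).trans
          (congrArg (-(Complex.I • sqrtS ·)) (Subtype.ext hx)) }
  have hSq : sqrtS.IsSquareOf S := ⟨hdom, fun ⟨x, hxS⟩ ⟨y, hy⟩ hTy hxy => by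
    obtain rfl : x = y := hxy
    exact hsq x hy hTy hxS⟩
  exact ⟨hH.isSelfAdjoint hsqrt, Set.ext fun z => hH.mem_pSpectrum_iff hsqrt hSq⟩

/-- Let `S ≥ 0` be selfadjoint on `L²(ℝ)` with nonnegative square root `√S`, and let `H`
act on `L²(ℝ) ⊕ L²(ℝ)` by `H(z₁, z₂) = (i√S z₂, -i√S z₁)` with domain `D(√S) ⊕ D(√S)`.
Then `H` is selfadjoint and `σ(H) = {ω : ω² ∈ σ(S)}`. -/
theorem stmt10
    (S sqrtS : L2R →ₗ.[ℂ] L2R)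
    (hS : IsSelfAdjoint S) (hSpos : ∀ x : S.domain, 0 ≤ (⟪S x, (x : L2R)⟫).re)
    (hsqrt : IsSelfAdjoint sqrtS)
    (hsqrtpos : ∀ x : sqrtS.domain, 0 ≤ (⟪sqrtS x, (x : L2R)⟫).re)
    (hdom : ∀ x : L2R, x ∈ S.domain ↔ ∃ hx : x ∈ sqrtS.domain, sqrtS ⟨x, hx⟩ ∈ sqrtS.domain)
    (hsq : ∀ (x : L2R) (hx : x ∈ sqrtS.domain) (hx2 : sqrtS ⟨x, hx⟩ ∈ sqrtS.domain)
      (hxS : x ∈ S.domain), S ⟨x, hxS⟩ = sqrtS ⟨sqrtS ⟨x, hx⟩, hx2⟩)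
    (H : WithLp 2 (L2R × L2R) →ₗ.[ℂ] WithLp 2 (L2R × L2R))
    (hHdom : ∀ p : WithLp 2 (L2R × L2R), p ∈ H.domain ↔
      (WithLp.equiv 2 (L2R × L2R) p).1 ∈ sqrtS.domain ∧
      (WithLp.equiv 2 (L2R × L2R) p).2 ∈ sqrtS.domain)
    (hHact : ∀ (p : H.domain)
      (h1 : (WithLp.equiv 2 (L2R × L2R) (p : WithLp 2 (L2R × L2R))).1 ∈ sqrtS.domain)
      (h2 : (WithLp.equiv 2 (L2R × L2R) (p : WithLp 2 (L2R × L2R))).2 ∈ sqrtS.domain),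
      H p = (WithLp.equiv 2 (L2R × L2R)).symm
        (Complex.I • sqrtS ⟨(WithLp.equiv 2 (L2R × L2R) (p : WithLp 2 (L2R × L2R))).2, h2⟩,
         -(Complex.I • sqrtS ⟨(WithLp.equiv 2 (L2R × L2R) (p : WithLp 2 (L2R × L2R))).1, h1⟩))) :
    IsSelfAdjoint H ∧ pSpectrum H = {z : ℂ | z ^ 2 ∈ pSpectrum S} :=
  stmt10_general S sqrtS hsqrt hdom hsq H hHdom hHact
end
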